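/- arXiv:0706.0066 — 2 statements merged into one kernel-verified Lean document; each statement's English description precedes it below -/
import Mathlib

section
/- Let M be a Gelfand–Tsetlin pattern of size 3 with δ(M)=m12+m22−m11−m23 and χ₋(M)=1 if δ(M)<0 else 0. Then C₂(M) = (m11−m22)(m23−m22) + (m12−m22)·δ(M)·χ₋(M), where C₂(M)=min{m11−m22, m12−m23}·min{m23−m22, m12−m11}. -/
/-- For a Gelfand–Tsetlin pattern of size 3,
`C₂(M) = C₁(M)·C̄₁(M) = (m11 - m22)(m23 - m22) + (m12 - m22)·δ(M)·χ₋(M)`. -/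
theorem stmt3 (m13 m23 m33 m12 m22 m11 : ℤ)
    (h1 : m13 ≥ m12) (h2 : m12 ≥ m23) (h3 : m23 ≥ m22) (h4 : m22 ≥ m33)
    (h5 : m12 ≥ m11) (h6 : m11 ≥ m22) :
    min (m11 - m22) (m12 - m23) * min (m23 - m22) (m12 - m11) =
      (m11 - m22) * (m23 - m22) + (m12 - m22) * (m12 + m22 - m11 - m23) *
        (if m12 + m22 - m11 - m23 < 0 then 1 else 0) := by
  by_cases h : m12 + m22 - m11 - m23 < 0
  · rw [if_pos h, min_eq_right (by omega), min_eq_right (by omega)]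
    ring
  · rw [if_neg h, min_eq_left (by omega), min_eq_left (by omega)]
    ring
end

section
/- Let M be a Gelfand–Tsetlin pattern of size 3 with δ(M)=m12+m22−m11−m23 and χ₊(M) the indicator of δ(M)>0. Define Ē(M) = C₁(M)·(m13−m33+1−C̄₁(M)) where C₁(M)=min{m11−m22,m12−m23} and C̄₁(M)=min{m23−m22,m12−m11}. Then Ē(M) = (m11−m22)(m13−m23−m33+m22+1) + (m13−m33−m12+m22+1)·δ(M)·χ₋(M), where χ₋(M) is the indicator of δ(M)<0. -/
theorem min_add_right_eq_add_mul_ite {α : Type*} [Ring α] [LinearOrder α] [IsOrderedAddMonoid α]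
    (a d : α) : min a (a + d) = a + d * (if d < 0 then 1 else 0) := by
  split_ifs with hd
  · rw [min_eq_right (add_le_of_nonpos_right hd.le), mul_one]
  · rw [min_eq_left (le_add_of_nonneg_right (not_lt.mp hd)), mul_zero, add_zero]

theorem stmt17_general (m13 m23 m33 m12 m22 m11 : ℤ) :
    min (m11 - m22) (m12 - m23) *
        (m13 - m33 + 1 - min (m23 - m22) (m12 - m11)) =
      (m11 - m22) * (m13 - m23 - m33 + m22 + 1) +
        (m13 - m33 - m12 + m22 + 1) * (m12 + m22 - m11 - m23) *
          (if m12 + m22 - m11 - m23 < 0 then 1 else 0) := by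
  -- Both minima compare two quantities differing by exactly δ(M).
  have hC₁ := min_add_right_eq_add_mul_ite (m11 - m22) (m12 + m22 - m11 - m23)
  have hC₁bar := min_add_right_eq_add_mul_ite (m23 - m22) (m12 + m22 - m11 - m23)
  rw [show m11 - m22 + (m12 + m22 - m11 - m23) = m12 - m23 by ring] at hC₁
  rw [show m23 - m22 + (m12 + m22 - m11 - m23) = m12 - m11 by ring] at hC₁bar
  rw [hC₁, hC₁bar]
  split_ifs <;> ring

/-- For a Gelfand–Tsetlin pattern of size 3,
`Ē(M) = C₁(M)·(m13 - m33 + 1 - C̄₁(M))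
      = (m11 - m22)(m13 - m23 - m33 + m22 + 1) + (m13 - m33 - m12 + m22 + 1)·δ(M)·χ₋(M)`. -/
theorem stmt17 (m13 m23 m33 m12 m22 m11 : ℤ)
    (h1 : m13 ≥ m12) (h2 : m12 ≥ m23) (h3 : m23 ≥ m22) (h4 : m22 ≥ m33)
    (h5 : m12 ≥ m11) (h6 : m11 ≥ m22) :
    min (m11 - m22) (m12 - m23) *
        (m13 - m33 + 1 - min (m23 - m22) (m12 - m11)) =
      (m11 - m22) * (m13 - m23 - m33 + m22 + 1) +
        (m13 - m33 - m12 + m22 + 1) * (m12 + m22 - m11 - m23) *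
          (if m12 + m22 - m11 - m23 < 0 then 1 else 0) :=
  stmt17_general m13 m23 m33 m12 m22 m11
end
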